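/- arXiv:2302.04772 — 3 statements merged into one kernel-verified Lean document; each statement's English description precedes it below -/
import Mathlib

section
/- Let R = 𝔽₂[c₂,…,cₙ] ⊆ S = 𝔽₂[τ, u₂,…,uₙ] via cᵢ ↦ τ^{i mod 2} uᵢ², and let θ₁,…,θ_{l-1} ∈ S be homogeneous elements such that θ₁,…,θ_{l-1}, together with any element mapping to them, generate an ideal I° of S. Then √(ι⁻¹(I°)) = √((τθ₁²,…,τθ_{l-1}²)) as ideals of R, where ι : R → S is the inclusion, provided τθᵢ² ∈ R for each i. -/
/-!
The substitution `ψ : τ ↦ 1, uᵢ ↦ cᵢ` is a one-sided inverse of `ι` up to Frobenius: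
`ψ (ι r) = r²`. Hence `r ∈ ι⁻¹(θ)` gives `r² ∈ (ψ θ₁, …, ψ θ_{l-1})`, and each `ψ θᵢ` lies in
`√(ρ)` because `(ψ θᵢ)² = ψ (τ θᵢ²) = ψ (ι ρᵢ) = ρᵢ²`. Conversely `ι ρᵢ = (τ θᵢ) θᵢ ∈ (θ)`.
-/

open MvPolynomial

/-- The inclusion `ι : 𝔽₂[c₂,…,cₙ] → 𝔽₂[τ,u₂,…,uₙ]`, `cᵢ ↦ τ^{i mod 2}uᵢ²`.
The variable `none` is `τ` and `some i` is `u_{i+2}`; the variable `i : Fin (n-1)` on the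
left is `c_{i+2}`, so the exponent of `τ` is `(i+2) % 2 = i % 2`. -/
noncomputable def chernIota (n : ℕ) :
    MvPolynomial (Fin (n - 1)) (ZMod 2) →+* MvPolynomial (Option (Fin (n - 1))) (ZMod 2) :=
  (MvPolynomial.aeval fun i : Fin (n - 1) =>
    (X none : MvPolynomial (Option (Fin (n - 1))) (ZMod 2)) ^ (i.val % 2) *
      X (some i) ^ 2).toRingHom

namespace Ideal

variable {R S ι : Type*} [CommRing R] [CommRing S]

theorem comap_le_radical_map_of_forall_pow (f : R →+* S) (g : S →+* R) {p : ℕ}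
    (hgf : ∀ r, g (f r) = r ^ p) (I : Ideal S) : I.comap f ≤ (I.map g).radical :=
  fun r hr => ⟨p, hgf r ▸ mem_map_of_mem g hr⟩

theorem radical_comap_span_eq_of_forall_pow (f : R →+* S) (g : S →+* R) {p m : ℕ}
    (hp : p ≠ 0) (hm : m ≠ 0) (hgf : ∀ r, g (f r) = r ^ p) {t : S} (ht : g t = 1)
    (θ : ι → S) (ρ : ι → R) (hρ : ∀ i, f (ρ i) = t * θ i ^ m) :
    (comap f (span (Set.range θ))).radical = (span (Set.range ρ)).radical := by
  apply le_antisymm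
  · have hgθ : (span (Set.range θ)).map g ≤ (span (Set.range ρ)).radical := by
      rw [map_span, span_le]
      rintro _ ⟨_, ⟨i, rfl⟩, rfl⟩
      refine ⟨m, ?_⟩
      have hpow : g (θ i) ^ m = ρ i ^ p := by
        rw [← hgf, hρ, map_mul, ht, one_mul, map_pow]
      rw [hpow]
      exact pow_mem_of_mem _ (subset_span (Set.mem_range_self i)) p (Nat.pos_of_ne_zero hp)
    rw [radical_le_radical_iff]
    exact (comap_le_radical_map_of_forall_pow f g hgf _).trans (radical_le_radical_iff.mpr hgθ)
  · refine radical_mono (span_le.mpr ?_)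
    rintro _ ⟨i, rfl⟩
    rw [SetLike.mem_coe, mem_comap, hρ]
    exact mul_mem_left _ _ <|
      pow_mem_of_mem _ (subset_span (Set.mem_range_self i)) m (Nat.pos_of_ne_zero hm)

end Ideal

noncomputable def chernPsi (n : ℕ) :
    MvPolynomial (Option (Fin (n - 1))) (ZMod 2) →+* MvPolynomial (Fin (n - 1)) (ZMod 2) :=
  (aeval fun j : Option (Fin (n - 1)) => j.elim 1 X).toRingHom

lemma chernPsi_X_none (n : ℕ) : chernPsi n (X none) = 1 := by
  simp [chernPsi]

lemma chernPsi_comp_chernIota (n : ℕ) :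
    (chernPsi n).comp (chernIota n) = frobenius (MvPolynomial (Fin (n - 1)) (ZMod 2)) 2 := by
  apply ringHom_ext
  · intro a
    simp [chernPsi, chernIota, frobenius_def, ← C_pow, ZMod.pow_card]
  · intro i
    simp [chernPsi, chernIota, frobenius_def]

lemma chernPsi_chernIota (n : ℕ) (r : MvPolynomial (Fin (n - 1)) (ZMod 2)) :
    chernPsi n (chernIota n r) = r ^ 2 :=
  RingHom.congr_fun (chernPsi_comp_chernIota n) r

theorem stmt14_general (n l : ℕ)
    (θ : Fin (l - 1) → MvPolynomial (Option (Fin (n - 1))) (ZMod 2))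
    (ρ : Fin (l - 1) → MvPolynomial (Fin (n - 1)) (ZMod 2))
    (hρ : ∀ i, chernIota n (ρ i) = X none * θ i ^ 2) :
    (Ideal.comap (chernIota n) (Ideal.span (Set.range θ))).radical =
      (Ideal.span (Set.range ρ)).radical :=
  Ideal.radical_comap_span_eq_of_forall_pow (chernIota n) (chernPsi n) two_ne_zero two_ne_zero
    (chernPsi_chernIota n) (chernPsi_X_none n) θ ρ hρ

/-- Radical-ideal comparison underlying Corollary 4.13: for homogeneous `θ₁,…,θ_{l-1}` in
`S = 𝔽₂[τ,u₂,…,uₙ]` with `τθᵢ² = ι(ρᵢ)` for some `ρᵢ` in the Chern subring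
`R = 𝔽₂[c₂,…,cₙ]`, one has `√(ι⁻¹((θ₁,…,θ_{l-1}))) = √((ρ₁,…,ρ_{l-1}))` in `R`. -/
theorem stmt14 (n l : ℕ)
    (θ : Fin (l - 1) → MvPolynomial (Option (Fin (n - 1))) (ZMod 2))
    (hhom : ∀ i, ∃ d, (θ i).IsHomogeneous d)
    (ρ : Fin (l - 1) → MvPolynomial (Fin (n - 1)) (ZMod 2))
    (hρ : ∀ i, chernIota n (ρ i) = X none * θ i ^ 2) :
    (Ideal.comap (chernIota n) (Ideal.span (Set.range θ))).radical =
      (Ideal.span (Set.range ρ)).radical :=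
  stmt14_general n l θ ρ hρ
end

section
/- In the polynomial ring 𝔽₂[x₁,…,xₙ,y₁,…,yₙ], if B(x,y) = Σ_{i,j} b_{ij} xᵢyⱼ is a bilinear form whose right radical is zero (i.e. the matrix (b_{ij}) has trivial kernel acting on y), then B(x,y), B(x,y²), …, B(x,y^{2^{n-1}}) is a regular sequence of length n. -/
/-!
A linear change of the `y`-variables by `b⁻¹` turns `B(x, y^(2^l))` into `D_l = ∑ xᵢ yᵢ^(2^l)`,
so it suffices to show that `D_0, …, D_(n-1)` is regular. We induct on the number of variable pairs,
working in `𝔽₂[xᵢ, yᵢ | i ∈ ℕ]`, and pass from `n` to `n + 1` pairs.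

Substituting `y_n ↦ ℓ` for `ℓ` in the `𝔽₂`-span of `y_0, …, y_(n-1)` sends the new sequence to
the old one up to an automorphism of the `x`-variables; since syzygies of a regular sequence are
Koszul, this makes every `y_n - ℓ`, and likewise `x_n`, a non-zero-divisor modulo
`D_0, …, D_(m-1)` for `m ≤ n`. For `m < n`, regularity of `D_m` modulo `y_n` then lifts by a
degree argument. For `m = n`, the subspace polynomial `φ_n(t) = ∏_ℓ (t + ℓ)` is additive, which
gives `D_n ≡ x_n φ_n(y_n)` modulo `D_0, …, D_(n-1)`: a product of non-zero-divisors.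
-/

open MvPolynomial Finset

namespace FrobeniusBilinear

section RegularPrefix

variable {A B : Type*} [CommRing A] [CommRing B]

def prefixSpan (c : ℕ → A) (m : ℕ) : Ideal A :=
  Ideal.span (Set.range fun k : Fin m => c k)

def IsRegularModPrefix (c : ℕ → A) (m : ℕ) : Prop :=
  ∀ f, f * c m ∈ prefixSpan c m → f ∈ prefixSpan c m

def IsWeaklyRegularPrefix (c : ℕ → A) (n : ℕ) : Prop :=
  ∀ m < n, IsRegularModPrefix c m

lemma IsWeaklyRegularPrefix.mono {c : ℕ → A} {l n : ℕ} (h : IsWeaklyRegularPrefix c n)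
    (hl : l ≤ n) : IsWeaklyRegularPrefix c l :=
  fun m hm => h m (hm.trans_le hl)

lemma mem_prefixSpan_iff {c : ℕ → A} {m : ℕ} {x : A} :
    x ∈ prefixSpan c m ↔ ∃ g : Fin m → A, ∑ k, g k * c k = x :=
  Ideal.mem_span_range_iff_exists_fun

lemma apply_mem_prefixSpan (c : ℕ → A) {k m : ℕ} (h : k < m) : c k ∈ prefixSpan c m :=
  Ideal.subset_span ⟨⟨k, h⟩, rfl⟩

lemma map_prefixSpan (φ : A →+* B) (c : ℕ → A) (m : ℕ) :
    (prefixSpan c m).map φ = prefixSpan (φ ∘ c) m := by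
  rw [prefixSpan, prefixSpan, Ideal.map_span, ← Set.range_comp]
  rfl

lemma map_mem_prefixSpan (φ : A →+* B) {c : ℕ → A} {m : ℕ} {x : A}
    (hx : x ∈ prefixSpan c m) : φ x ∈ prefixSpan (φ ∘ c) m :=
  map_prefixSpan φ c m ▸ Ideal.mem_map_of_mem φ hx

lemma prefixSpan_le_ker (φ : A →+* B) {c : ℕ → A} {m : ℕ} (h : ∀ k < m, φ (c k) = 0) :
    prefixSpan c m ≤ RingHom.ker φ :=
  Ideal.span_le.mpr <| Set.range_subset_iff.mpr fun k => h k k.isLt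

lemma IsRegularModPrefix.of_leftInverse {ι : A →+* B} {ρ : B →+* A}
    (hρι : Function.LeftInverse ρ ι) {c : ℕ → A} {m : ℕ}
    (hc : IsRegularModPrefix (ι ∘ c) m) : IsRegularModPrefix c m := by
  intro f hf
  have hι : ι f * ι (c m) ∈ prefixSpan (ι ∘ c) m := by
    simpa using map_mem_prefixSpan ι hf
  have hρ := map_mem_prefixSpan ρ (hc _ hι)
  rwa [hρι f, ← Function.comp_assoc, hρι.comp_eq_id, Function.id_comp] at hρ

lemma IsWeaklyRegularPrefix.of_leftInverse {ι : A →+* B} {ρ : B →+* A}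
    (hρι : Function.LeftInverse ρ ι) {c : ℕ → A} {n : ℕ}
    (hc : IsWeaklyRegularPrefix (ι ∘ c) n) : IsWeaklyRegularPrefix c n :=
  fun m hm => (hc m hm).of_leftInverse hρι

lemma exists_alternating_of_sum_mul_eq_zero {c : ℕ → A} {m : ℕ}
    (hc : IsWeaklyRegularPrefix c m) {g : Fin m → A} (hg : ∑ k, g k * c k = 0) :
    ∃ a : Fin m → Fin m → A, (∀ k j, a k j = -a j k) ∧ (∀ k, a k k = 0) ∧
      ∀ k, g k = ∑ j, a k j * c j := by
  induction m with
  | zero => exact ⟨fun _ _ => 0, finZeroElim, finZeroElim, finZeroElim⟩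
  | succ m ih =>
    rw [Fin.sum_univ_castSucc] at hg
    simp only [Fin.val_castSucc, Fin.val_last] at hg
    have hlast : g (Fin.last m) * c m ∈ prefixSpan c m := by
      rw [eq_neg_of_add_eq_zero_right hg]
      exact neg_mem (Ideal.sum_mem _ fun k _ =>
        Ideal.mul_mem_left _ _ (apply_mem_prefixSpan c k.isLt))
    obtain ⟨b, hb⟩ := mem_prefixSpan_iff.mp (hc m m.lt_succ_self _ hlast)
    have hg' : ∑ k : Fin m, (g k.castSucc + b k * c m) * c k = 0 := by
      simp only [add_mul, sum_add_distrib, mul_right_comm _ (c m), ← sum_mul, hb]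
      exact hg
    obtain ⟨a, hskew, hdiag, ha⟩ := ih (hc.mono m.le_succ) hg'
    refine ⟨Fin.lastCases (Fin.lastCases 0 b) fun k => Fin.lastCases (-b k) (a k),
      ?_, ?_, ?_⟩
    · intro k j
      induction k using Fin.lastCases <;> induction j using Fin.lastCases
      all_goals simp only [Fin.lastCases_last, Fin.lastCases_castSucc]
      all_goals first | exact hskew _ _ | simp
    · intro k
      induction k using Fin.lastCases <;> simp [hdiag]
    · intro k
      induction k using Fin.lastCases with
      | last => simp [Fin.sum_univ_castSucc, hb]
      | cast k =>
        simp only [Fin.sum_univ_castSucc, Fin.lastCases_castSucc, Fin.lastCases_last,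
          Fin.val_castSucc, Fin.val_last, ← ha k]
        ring

lemma sum_alternating_mul_mul_eq_zero {m : ℕ} {a : Fin m → Fin m → A}
    (hskew : ∀ k j, a k j = -a j k) (hdiag : ∀ k, a k k = 0) (v : Fin m → A) :
    ∑ k, ∑ j, a k j * v j * v k = 0 := by
  rw [← sum_product']
  refine sum_involution (fun p _ => p.swap) (fun p _ => ?_) (fun p _ hp hswap => ?_)
    (fun p _ => mem_univ _) (fun p _ => rfl)
  · rw [hskew p.1 p.2, Prod.fst_swap, Prod.snd_swap]
    ring
  · obtain ⟨k, j⟩ := p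
    obtain rfl : j = k := (Prod.mk.inj hswap).1
    exact hp (by simp [hdiag])

/- `π` is a splitting of `A → A ⧸ (u)`. Reducing `u h = ∑ gₖ cₖ` by `π` gives a syzygy of the
`π cₖ`, which is Koszul; lifting it, `gₖ ≡ ∑ⱼ aₖⱼ cⱼ` modulo `u` with `a` alternating, and the
alternating part contributes nothing to `∑ gₖ cₖ`. -/
lemma mem_prefixSpan_of_mul_mem_of_retraction {c : ℕ → A} {m : ℕ} {u : A}
    (hu : IsLeftRegular u) {π : A →+* A} (hπu : π u = 0) (hdvd : ∀ x, u ∣ x - π x)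
    (hreg : IsWeaklyRegularPrefix (π ∘ c) m) {h : A} (hh : u * h ∈ prefixSpan c m) :
    h ∈ prefixSpan c m := by
  have hππ (x : A) : π (π x) = π x := by
    obtain ⟨y, hy⟩ := hdvd x
    have := congrArg π hy
    rwa [map_sub, map_mul, hπu, zero_mul, sub_eq_zero, eq_comm] at this
  obtain ⟨g, hg⟩ := mem_prefixSpan_iff.mp hh
  have hsyz : ∑ k, π (g k) * (π ∘ c) k = 0 := by
    simpa [hπu] using congrArg π hg
  obtain ⟨a, hskew, hdiag, ha⟩ := exists_alternating_of_sum_mul_eq_zero hreg hsyz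
  have hdvd' (k : Fin m) : u ∣ g k - ∑ j, π (a k j) * c j := by
    have hπ : π (g k - ∑ j, π (a k j) * c j) = 0 := by
      simpa [hππ, sub_eq_zero] using congrArg π (ha k)
    simpa [hπ] using hdvd (g k - ∑ j, π (a k j) * c j)
  choose q hq using hdvd'
  have hcancel : ∑ k, ∑ j, π (a k j) * c j * c k = 0 :=
    sum_alternating_mul_mul_eq_zero (fun k j => by rw [hskew, map_neg])
      (fun k => by rw [hdiag, map_zero]) _
  refine mem_prefixSpan_iff.mpr ⟨q, hu ?_⟩
  calc u * ∑ k, q k * c k = ∑ k, g k * c k - ∑ k, ∑ j, π (a k j) * c j * c k := by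
        simp only [mul_sum, ← sum_mul, ← sum_sub_distrib, ← sub_mul, ← mul_assoc, ← hq]
    _ = u * h := by rw [hg, hcancel, sub_zero]

lemma mem_prefixSpan_sup_of_mul_mem {c : ℕ → A} {m : ℕ} {u : A} {π : A →+* A}
    (hdvd : ∀ x, u ∣ x - π x) (hreg : IsRegularModPrefix (π ∘ c) m) {f : A}
    (hf : f * c m ∈ prefixSpan c m) : f ∈ prefixSpan c m ⊔ Ideal.span {u} := by
  have hmod (x : A) : x - π x ∈ prefixSpan c m ⊔ Ideal.span {u} :=
    Ideal.mem_sup_right (Ideal.mem_span_singleton.mpr (hdvd x))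
  have hle : prefixSpan (π ∘ c) m ≤ prefixSpan c m ⊔ Ideal.span {u} :=
    Ideal.span_le.mpr <| Set.range_subset_iff.mpr fun k => by
      simpa using sub_mem (Ideal.mem_sup_left (apply_mem_prefixSpan c k.isLt)) (hmod (c k))
  have hπf : π f ∈ prefixSpan (π ∘ c) m :=
    hreg _ (by simpa using map_mem_prefixSpan π hf)
  simpa using add_mem (hle hπf) (hmod f)

/- For homogeneous `f` of degree `d`, write `f = i + u g` with `i ∈ I`; the degree-`d` part of
`u g` is `u g'` with `g'` homogeneous of degree `d - e < d` and `g' c ∈ I`, so induct on `d`. -/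
lemma mem_of_mul_mem_of_isHomogeneous {σ : Type*} [SetLike σ A] [AddSubgroupClass σ A]
    (𝒜 : ℕ → σ) [GradedRing 𝒜] {I : Ideal A} (hI : I.IsHomogeneous 𝒜) {u c : A} {e j : ℕ}
    (he : 0 < e) (hu : u ∈ 𝒜 e) (hc : c ∈ 𝒜 j) (hu_reg : ∀ f, u * f ∈ I → f ∈ I)
    (hc_mod : ∀ f, f * c ∈ I → f ∈ I ⊔ Ideal.span {u}) {f : A} (hf : f * c ∈ I) : f ∈ I := by
  classical
  suffices hhom : ∀ d, ∀ f ∈ 𝒜 d, f * c ∈ I → f ∈ I by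
    refine (Ideal.IsHomogeneous.mem_iff 𝒜 hI).mpr fun d => hhom d _ (SetLike.coe_mem _) ?_
    rw [← DirectSum.coe_decompose_mul_add_of_right_mem 𝒜 hc]
    exact hI (d + j) hf
  intro d
  induction d using Nat.strong_induction_on with
  | _ d ih =>
  intro f hfd hf
  obtain ⟨i, hi, _, hug, rfl⟩ := Submodule.mem_sup.mp (hc_mod f hf)
  obtain ⟨g, rfl⟩ := Ideal.mem_span_singleton.mp hug
  have hsplit : i + u * g = DirectSum.decompose 𝒜 i d + DirectSum.decompose 𝒜 (u * g) d := by
    rw [← DirectSum.decompose_of_mem_same 𝒜 hfd, DirectSum.decompose_add, DirectSum.add_apply,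
      AddMemClass.coe_add]
  rw [hsplit, DirectSum.coe_decompose_mul_of_left_mem 𝒜 d hu] at hf ⊢
  refine add_mem (hI d hi) ?_
  split_ifs at hf ⊢ with hed
  · refine Ideal.mul_mem_left _ _ (ih (d - e) (by omega) _ (SetLike.coe_mem _) (hu_reg _ ?_))
    rw [← mul_assoc, ← add_sub_cancel_left (DirectSum.decompose 𝒜 i d : A)
      (u * _), sub_mul]
    exact sub_mem hf (I.mul_mem_right _ (hI d hi))
  · exact zero_mem I

lemma ofList_ofFn {m : ℕ} (v : Fin m → A) :
    Ideal.ofList (List.ofFn v) = Ideal.span (Set.range v) := by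
  simp only [Ideal.ofList, List.mem_ofFn]
  rfl

lemma isRegular_ofFn {c : ℕ → A} {n : ℕ} (hreg : IsWeaklyRegularPrefix c n)
    (hne : prefixSpan c n ≠ ⊤) :
    RingTheory.Sequence.IsRegular A (List.ofFn fun l : Fin n => c l) := by
  have hspan (i : ℕ) (hi : i ≤ n) :
      Ideal.ofList ((List.ofFn fun l : Fin n => c l).take i) • (⊤ : Ideal A) = prefixSpan c i := by
    rw [← Fin.ofFn_take_eq_take_ofFn hi, ofList_ofFn, Ideal.smul_eq_mul, Ideal.mul_top]
    rfl
  refine ⟨⟨fun i hi => ?_⟩, ?_⟩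
  · rw [List.length_ofFn] at hi
    rw [hspan i hi.le, isSMulRegular_quotient_iff_mem_of_smul_mem, List.getElem_ofFn]
    exact fun f hf => hreg i hi f (by rwa [smul_eq_mul, mul_comm] at hf)
  · have := hspan n le_rfl
    rw [List.take_of_length_le (List.length_ofFn ..).le] at this
    rwa [this, ne_comm]

end RegularPrefix

lemma X_sub_dvd_sub_aeval_update {σ R : Type*} [CommRing R] [DecidableEq σ] (s : σ)
    (v p : MvPolynomial σ R) : X s - v ∣ p - aeval (Function.update X s v) p := by
  set I := Ideal.span {X s - v}
  rw [← Ideal.mem_span_singleton, ← Ideal.Quotient.eq]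
  have hcomp : (Ideal.Quotient.mkₐ R I).comp (aeval (Function.update X s v)) =
      Ideal.Quotient.mkₐ R I := by
    refine algHom_ext fun t => ?_
    obtain rfl | hts := eq_or_ne t s
    · simp only [AlgHom.comp_apply, aeval_X, Function.update_self, Ideal.Quotient.mkₐ_eq_mk]
      exact Ideal.Quotient.eq.mpr (neg_sub (X t) v ▸ neg_mem (Ideal.mem_span_singleton_self _))
    · simp [hts]
  exact (AlgHom.congr_fun hcomp p).symm

noncomputable section

/-- `𝔽₂[xᵢ, yᵢ | i ∈ ℕ]`, with `xᵢ = X (.inl i)` and `yᵢ = X (.inr i)`. -/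
abbrev PolyXY : Type := MvPolynomial (ℕ ⊕ ℕ) (ZMod 2)

def diagForm (n k : ℕ) : PolyXY := ∑ i ∈ range n, X (.inl i) * X (.inr i) ^ 2 ^ k

def linY (n : ℕ) (ε : ℕ → ZMod 2) : PolyXY := ∑ i ∈ range n, C (ε i) * X (.inr i)

def substY (n : ℕ) (ε : ℕ → ZMod 2) : PolyXY →ₐ[ZMod 2] PolyXY :=
  aeval (Function.update X (.inr n) (linY n ε))

def killX (n : ℕ) : PolyXY →ₐ[ZMod 2] PolyXY := aeval (Function.update X (.inl n) 0)

def shearX (n : ℕ) (ε : ℕ → ZMod 2) : PolyXY →ₐ[ZMod 2] PolyXY :=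
  aeval <| Sum.elim
    (fun i => if i = n then X (.inl n) else X (.inl i) + C (ε i) * X (.inl n))
    fun j => X (.inr j)

section Substitutions

variable (n : ℕ) (ε : ℕ → ZMod 2)

lemma substY_linY (ε' : ℕ → ZMod 2) : substY n ε (linY n ε') = linY n ε' := by
  simp only [linY, map_sum, map_mul, algHom_C, substY, aeval_X]
  refine sum_congr rfl fun i hi => ?_
  rw [Function.update_of_ne (by simpa using (mem_range.mp hi).ne)]
  rfl

lemma substY_X_inr_sub_linY : substY n ε (X (.inr n) - linY n ε) = 0 := by
  rw [map_sub, substY_linY, substY, aeval_X, Function.update_self, sub_self]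

lemma X_inr_sub_linY_dvd (p : PolyXY) : X (.inr n) - linY n ε ∣ p - substY n ε p :=
  X_sub_dvd_sub_aeval_update _ _ p

lemma X_inl_dvd_sub_killX (p : PolyXY) : X (.inl n) ∣ p - killX n p := by
  have h := X_sub_dvd_sub_aeval_update (Sum.inl n) (0 : PolyXY) p
  rwa [sub_zero] at h

lemma X_inr_sub_linY_ne_zero : (X (.inr n) - linY n ε : PolyXY) ≠ 0 := by
  intro h
  have := congrArg (eval fun s => if s = .inr n then 1 else 0) h
  simp [linY] at this

lemma linY_zero : linY n 0 = 0 := by simp [linY]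

lemma linY_pow (k : ℕ) : linY n ε ^ 2 ^ k = ∑ i ∈ range n, C (ε i) * X (.inr i) ^ 2 ^ k := by
  rw [linY, sum_pow_char_pow]
  refine sum_congr rfl fun i _ => ?_
  rw [mul_pow, ← map_pow, ZMod.pow_card_pow]

lemma shearX_shearX (p : PolyXY) : shearX n ε (shearX n ε p) = p := by
  suffices (shearX n ε).comp (shearX n ε) = AlgHom.id _ _ from AlgHom.congr_fun this p
  refine algHom_ext fun s => ?_
  rcases s with i | j
  · by_cases hi : i = n
    · simp [shearX, hi]
    · simp [shearX, hi, add_assoc, CharTwo.add_self_eq_zero]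
  · simp [shearX]

lemma shearX_zero : shearX n 0 = AlgHom.id _ _ := by
  refine algHom_ext fun s => ?_
  rcases s with i | j
  · by_cases hi : i = n <;> simp [shearX, hi]
  · simp [shearX]

lemma substY_diagForm_succ (k : ℕ) :
    substY n ε (diagForm (n + 1) k) = shearX n ε (diagForm n k) := by
  have hsubst (i : ℕ) (hi : i < n) :
      substY n ε (X (.inl i) * X (.inr i) ^ 2 ^ k) = X (.inl i) * X (.inr i) ^ 2 ^ k := by
    simp [substY, hi.ne]
  have hshear (i : ℕ) (hi : i < n) : shearX n ε (X (.inl i) * X (.inr i) ^ 2 ^ k) =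
      X (.inl i) * X (.inr i) ^ 2 ^ k + X (.inl n) * (C (ε i) * X (.inr i) ^ 2 ^ k) := by
    simp only [shearX, map_mul, map_pow, aeval_X, Sum.elim_inl, Sum.elim_inr, if_neg hi.ne]
    ring
  rw [diagForm, diagForm, sum_range_succ, map_add, map_sum, map_sum,
    sum_congr rfl fun i hi => hsubst i (mem_range.mp hi),
    sum_congr rfl fun i hi => hshear i (mem_range.mp hi), sum_add_distrib, ← mul_sum,
    ← linY_pow]
  simp [substY]

lemma killX_diagForm_succ (k : ℕ) : killX n (diagForm (n + 1) k) = diagForm n k := by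
  rw [diagForm, diagForm, sum_range_succ, map_add, map_sum]
  refine (congrArg₂ _ (sum_congr rfl fun i hi => ?_) (by simp [killX])).trans (add_zero _)
  simp [killX, (mem_range.mp hi).ne]

lemma X_inr_sub_linY_add_X_inr {m : ℕ} (hm : m < n) :
    X (.inr n) - linY n ε + X (.inr m) = X (.inr n) - linY n (Function.update ε m (ε m - 1)) := by
  have hterm (i : ℕ) : C (Function.update ε m (ε m - 1) i) * X (.inr i) =
      C (ε i) * X (.inr i) - if i = m then X (.inr m) else (0 : PolyXY) := by
    obtain rfl | hi := eq_or_ne i m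
    · simp [sub_mul]
    · simp [hi]
  rw [linY, linY, sum_congr rfl fun i _ => hterm i, sum_sub_distrib, sum_ite_eq',
    if_pos (mem_range.mpr hm)]
  ring

end Substitutions

/- `moore m t = ∏ (t + ℓ)`, `ℓ` ranging over the `𝔽₂`-span of `y_0, …, y_(m-1)`. Being additive
in `t`, it is a combination of the `t ^ 2 ^ k`, and it is defined through these coefficients. -/
def mooreCoeff : ℕ → ℕ → PolyXY
  | 0, k => if k = 0 then 1 else 0
  | m + 1, 0 => (∑ j ∈ range (m + 1), mooreCoeff m j * X (.inr m) ^ 2 ^ j) * mooreCoeff m 0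
  | m + 1, k + 1 => mooreCoeff m k ^ 2 +
      (∑ j ∈ range (m + 1), mooreCoeff m j * X (.inr m) ^ 2 ^ j) * mooreCoeff m (k + 1)

def moore (m : ℕ) (t : PolyXY) : PolyXY := ∑ k ∈ range (m + 1), mooreCoeff m k * t ^ 2 ^ k

lemma mooreCoeff_succ_zero (m : ℕ) :
    mooreCoeff (m + 1) 0 = moore m (X (.inr m)) * mooreCoeff m 0 := rfl

lemma mooreCoeff_succ_succ (m k : ℕ) :
    mooreCoeff (m + 1) (k + 1) = mooreCoeff m k ^ 2 + moore m (X (.inr m)) * mooreCoeff m (k + 1) :=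
  rfl

lemma mooreCoeff_of_lt {m k : ℕ} (h : m < k) : mooreCoeff m k = 0 := by
  induction m generalizing k with
  | zero => obtain ⟨k, rfl⟩ := Nat.exists_eq_add_one.mpr h; rfl
  | succ m ih =>
    obtain ⟨k, rfl⟩ := Nat.exists_eq_add_one.mpr (Nat.zero_lt_of_lt h)
    rw [mooreCoeff_succ_succ, ih (by omega), ih (by omega)]
    ring

lemma mooreCoeff_self (m : ℕ) : mooreCoeff m m = 1 := by
  induction m with
  | zero => rfl
  | succ m ih => rw [mooreCoeff_succ_succ, ih, mooreCoeff_of_lt m.lt_succ_self]; ring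

lemma moore_zero (t : PolyXY) : moore 0 t = t := by simp [moore, mooreCoeff]

lemma moore_add (m : ℕ) (s t : PolyXY) : moore m (s + t) = moore m s + moore m t := by
  simp only [moore, ← sum_add_distrib, add_pow_char_pow, mul_add]

lemma moore_succ (m : ℕ) (t : PolyXY) :
    moore (m + 1) t = moore m t ^ 2 + moore m (X (.inr m)) * moore m t := by
  have hsq : moore m t ^ 2 = ∑ k ∈ range (m + 1), mooreCoeff m k ^ 2 * t ^ 2 ^ (k + 1) := by
    rw [moore, sum_pow_char]
    refine sum_congr rfl fun k _ => ?_
    rw [mul_pow, ← pow_mul, ← pow_succ]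
  have hext : moore m t = ∑ k ∈ range (m + 2), mooreCoeff m k * t ^ 2 ^ k := by
    rw [sum_range_succ _ (m + 1), mooreCoeff_of_lt m.lt_succ_self, zero_mul, add_zero]
    rfl
  rw [hsq, hext, moore, sum_range_succ', sum_range_succ' _ (m + 1), mul_add, mul_sum]
  simp only [mooreCoeff_succ_succ, mooreCoeff_succ_zero, add_mul, sum_add_distrib, mul_assoc]
  ring

lemma moore_succ_eq_mul (m : ℕ) (t : PolyXY) :
    moore (m + 1) t = moore m t * moore m (t + X (.inr m)) := by
  rw [moore_succ, moore_add]
  ring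

lemma moore_X_inr_of_lt {m i : ℕ} (h : i < m) : moore m (X (.inr i)) = 0 := by
  induction m with
  | zero => omega
  | succ m ih =>
    rw [moore_succ]
    obtain h | rfl := Nat.lt_succ_iff_lt_or_eq.mp h
    · rw [ih h]
      ring
    · rw [sq, CharTwo.add_self_eq_zero]

lemma sum_mooreCoeff_mul_diagForm (m N : ℕ) :
    ∑ k ∈ range (m + 1), mooreCoeff m k * diagForm N k =
      ∑ i ∈ range N, X (.inl i) * moore m (X (.inr i)) := by
  simp only [diagForm, moore, mul_sum]
  rw [sum_comm]
  exact sum_congr rfl fun i _ => sum_congr rfl fun k _ => by ring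

lemma diagForm_add_sum_mooreCoeff_mul (n : ℕ) :
    diagForm (n + 1) n + ∑ k ∈ range n, mooreCoeff n k * diagForm (n + 1) k =
      X (.inl n) * moore n (X (.inr n)) := by
  have h := sum_mooreCoeff_mul_diagForm n (n + 1)
  have hvanish : ∑ i ∈ range n, X (.inl i) * moore n (X (.inr i)) = 0 :=
    sum_eq_zero fun i hi => by rw [moore_X_inr_of_lt (mem_range.mp hi), mul_zero]
  rw [sum_range_succ, mooreCoeff_self, one_mul, sum_range_succ, hvanish, zero_add] at h
  rw [← h, add_comm]

section Regularity

variable (n : ℕ)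

lemma mem_prefixSpan_of_X_inr_sub_linY_mul_mem (ε : ℕ → ZMod 2) {l : ℕ}
    (hreg : IsWeaklyRegularPrefix (diagForm n) l) {h : PolyXY}
    (hh : (X (.inr n) - linY n ε) * h ∈ prefixSpan (diagForm (n + 1)) l) :
    h ∈ prefixSpan (diagForm (n + 1)) l := by
  refine mem_prefixSpan_of_mul_mem_of_retraction
    (IsRegular.of_ne_zero (X_inr_sub_linY_ne_zero n ε)).left (π := (substY n ε).toRingHom)
    (substY_X_inr_sub_linY n ε) (X_inr_sub_linY_dvd n ε) ?_ hh
  have hcomp : (substY n ε).toRingHom ∘ diagForm (n + 1) = (shearX n ε).toRingHom ∘ diagForm n :=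
    funext (substY_diagForm_succ n ε)
  rw [hcomp]
  refine IsWeaklyRegularPrefix.of_leftInverse (ι := (shearX n ε).toRingHom)
    (ρ := (shearX n ε).toRingHom) (shearX_shearX n ε) ?_
  convert hreg using 1
  funext k
  exact shearX_shearX n ε _

lemma mem_prefixSpan_of_X_inl_mul_mem {l : ℕ}
    (hreg : IsWeaklyRegularPrefix (diagForm n) l) {h : PolyXY}
    (hh : X (.inl n) * h ∈ prefixSpan (diagForm (n + 1)) l) :
    h ∈ prefixSpan (diagForm (n + 1)) l := by
  refine mem_prefixSpan_of_mul_mem_of_retraction (IsRegular.of_ne_zero (X_ne_zero _)).left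
    (π := (killX n).toRingHom) (by simp [killX]) (X_inl_dvd_sub_killX n) ?_ hh
  convert hreg using 1
  exact funext (killX_diagForm_succ n)

lemma mem_prefixSpan_of_mul_moore_mem (hreg : IsWeaklyRegularPrefix (diagForm n) n) {m : ℕ}
    (hm : m ≤ n) (ε : ℕ → ZMod 2) {g : PolyXY}
    (hg : g * moore m (X (.inr n) - linY n ε) ∈ prefixSpan (diagForm (n + 1)) n) :
    g ∈ prefixSpan (diagForm (n + 1)) n := by
  induction m generalizing ε g with
  | zero =>
    rw [moore_zero, mul_comm] at hg
    exact mem_prefixSpan_of_X_inr_sub_linY_mul_mem n ε hreg hg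
  | succ m ih =>
    rw [moore_succ_eq_mul, X_inr_sub_linY_add_X_inr n ε hm, ← mul_assoc, mul_right_comm] at hg
    exact ih (by omega) _ (ih (by omega) ε hg)

lemma isRegularModPrefix_diagForm_succ_self (hreg : IsWeaklyRegularPrefix (diagForm n) n) :
    IsRegularModPrefix (diagForm (n + 1)) n := by
  intro f hf
  have hlower : f * ∑ k ∈ range n, mooreCoeff n k * diagForm (n + 1) k ∈
      prefixSpan (diagForm (n + 1)) n :=
    Ideal.mul_mem_left _ _ <| Ideal.sum_mem _ fun k hk =>
      Ideal.mul_mem_left _ _ (apply_mem_prefixSpan _ (mem_range.mp hk))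
  have hX : X (.inl n) * (f * moore n (X (.inr n))) ∈ prefixSpan (diagForm (n + 1)) n := by
    rw [mul_left_comm, ← diagForm_add_sum_mooreCoeff_mul, mul_add]
    exact add_mem hf hlower
  refine mem_prefixSpan_of_mul_moore_mem n hreg le_rfl 0 ?_
  rw [linY_zero, sub_zero]
  exact mem_prefixSpan_of_X_inl_mul_mem n hreg hX

attribute [local instance] MvPolynomial.gradedAlgebra in
lemma isRegularModPrefix_diagForm_succ_of_lt (hreg : IsWeaklyRegularPrefix (diagForm n) n)
    {m : ℕ} (hm : m < n) : IsRegularModPrefix (diagForm (n + 1)) m := by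
  have hhom (N k : ℕ) : diagForm N k ∈ homogeneousSubmodule (ℕ ⊕ ℕ) (ZMod 2) (1 + 2 ^ k) :=
    IsHomogeneous.sum _ _ _ fun i _ =>
      (isHomogeneous_X _ _).mul (by simpa using (isHomogeneous_X _ _).pow (2 ^ k))
  have hπ : (substY n 0).toRingHom ∘ diagForm (n + 1) = diagForm n := by
    funext k
    simp [substY_diagForm_succ, shearX_zero]
  have hdvd (p : PolyXY) : X (.inr n) ∣ p - substY n 0 p := by
    simpa only [linY_zero, sub_zero] using X_inr_sub_linY_dvd n 0 p
  intro f hf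
  refine mem_of_mul_mem_of_isHomogeneous (homogeneousSubmodule (ℕ ⊕ ℕ) (ZMod 2))
    (Ideal.homogeneous_span _ _ ?_) one_pos (isHomogeneous_X _ (Sum.inr n)) (hhom _ m)
    (fun g hg => ?_) (fun g hg => ?_) hf
  · rintro _ ⟨k, rfl⟩
    exact ⟨_, hhom _ k⟩
  · refine mem_prefixSpan_of_X_inr_sub_linY_mul_mem n 0 (hreg.mono hm.le) ?_
    rwa [linY_zero, sub_zero]
  · refine mem_prefixSpan_sup_of_mul_mem (π := (substY n 0).toRingHom) hdvd ?_ hg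
    rw [hπ]
    exact hreg m hm

theorem isWeaklyRegularPrefix_diagForm : IsWeaklyRegularPrefix (diagForm n) n := by
  induction n with
  | zero => exact fun m hm => absurd hm m.not_lt_zero
  | succ n ih =>
    intro m hm
    obtain hm | rfl := Nat.lt_succ_iff_lt_or_eq.mp hm
    · exact isRegularModPrefix_diagForm_succ_of_lt n ih hm
    · exact isRegularModPrefix_diagForm_succ_self m ih

end Regularity

section LinearSubst

variable {ι R : Type*} [Fintype ι] [CommRing R]

def linearSubstY (M : Matrix ι ι R) : MvPolynomial (ι ⊕ ι) R →ₐ[R] MvPolynomial (ι ⊕ ι) R :=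
  aeval <| Sum.elim (fun i => X (.inl i)) fun j => ∑ k, C (M j k) * X (.inr k)

lemma linearSubstY_comp (M N : Matrix ι ι R) :
    (linearSubstY M).comp (linearSubstY N) = linearSubstY (N * M) := by
  refine algHom_ext fun s => ?_
  rcases s with i | j
  · simp [linearSubstY]
  · simp only [linearSubstY, AlgHom.comp_apply, aeval_X, Sum.elim_inr, map_sum, map_mul,
      aeval_C, algebraMap_eq, mul_sum]
    rw [sum_comm]
    refine sum_congr rfl fun t _ => ?_
    simp only [Matrix.mul_apply, map_sum, map_mul, sum_mul, mul_assoc]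

lemma linearSubstY_one [DecidableEq ι] : linearSubstY (1 : Matrix ι ι R) = AlgHom.id R _ := by
  refine algHom_ext fun s => ?_
  rcases s with i | j
  · simp [linearSubstY]
  · simp [linearSubstY, Matrix.one_apply]

lemma linearSubstY_leftInverse [DecidableEq ι] {M N : Matrix ι ι R} (h : N * M = 1) :
    Function.LeftInverse (linearSubstY M) (linearSubstY N) := fun p => by
  rw [← AlgHom.comp_apply, linearSubstY_comp, h, linearSubstY_one, AlgHom.id_apply]

end LinearSubst

def diagFormFin (n k : ℕ) : MvPolynomial (Fin n ⊕ Fin n) (ZMod 2) :=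
  ∑ i : Fin n, X (.inl i) * X (.inr i) ^ 2 ^ k

def bilinForm {n : ℕ} (b : Matrix (Fin n) (Fin n) (ZMod 2)) (l : ℕ) :
    MvPolynomial (Fin n ⊕ Fin n) (ZMod 2) :=
  ∑ i, ∑ j, C (b i j) * X (.inl i) * X (.inr j) ^ 2 ^ l

section BilinForm

variable {n : ℕ}

lemma rename_diagFormFin (k : ℕ) :
    rename (Sum.map Fin.val Fin.val) (diagFormFin n k) = diagForm n k := by
  simp [diagFormFin, diagForm,
    ← Fin.sum_univ_eq_sum_range fun i => (X (.inl i) * X (.inr i) ^ 2 ^ k : PolyXY)]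

lemma linearSubstY_diagFormFin (b : Matrix (Fin n) (Fin n) (ZMod 2)) (l : ℕ) :
    linearSubstY b (diagFormFin n l) = bilinForm b l := by
  rw [diagFormFin, bilinForm, map_sum]
  refine sum_congr rfl fun i _ => ?_
  rw [map_mul, map_pow, linearSubstY, aeval_X, aeval_X, Sum.elim_inl, Sum.elim_inr,
    sum_pow_char_pow, mul_sum]
  refine sum_congr rfl fun j _ => ?_
  rw [mul_pow, ← map_pow, ZMod.pow_card_pow]
  ring

lemma isWeaklyRegularPrefix_diagFormFin : IsWeaklyRegularPrefix (diagFormFin n) n := by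
  have hinj : Function.Injective (Sum.map Fin.val Fin.val : Fin n ⊕ Fin n → ℕ ⊕ ℕ) :=
    Sum.map_injective.mpr ⟨Fin.val_injective, Fin.val_injective⟩
  refine IsWeaklyRegularPrefix.of_leftInverse
    (ι := (rename (R := ZMod 2) (Sum.map Fin.val Fin.val)).toRingHom)
    (ρ := (killCompl hinj).toRingHom) (killCompl_rename_app hinj) ?_
  convert isWeaklyRegularPrefix_diagForm n using 1
  exact funext rename_diagFormFin

lemma isWeaklyRegularPrefix_bilinForm {b : Matrix (Fin n) (Fin n) (ZMod 2)} (hb : IsUnit b.det) :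
    IsWeaklyRegularPrefix (bilinForm b) n := by
  refine IsWeaklyRegularPrefix.of_leftInverse (ι := (linearSubstY b⁻¹).toRingHom)
    (ρ := (linearSubstY b).toRingHom) (linearSubstY_leftInverse (b.nonsing_inv_mul hb)) ?_
  convert isWeaklyRegularPrefix_diagFormFin using 1
  funext k
  simp [← linearSubstY_diagFormFin, linearSubstY_leftInverse (b.mul_nonsing_inv hb) _]

lemma prefixSpan_bilinForm_ne_top (b : Matrix (Fin n) (Fin n) (ZMod 2)) :
    prefixSpan (bilinForm b) n ≠ ⊤ := by
  refine ne_top_of_le_ne_top (RingHom.ker_ne_top (constantCoeff (R := ZMod 2)))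
    (prefixSpan_le_ker _ fun k _ => ?_)
  simp [bilinForm]

end BilinForm

end

end FrobeniusBilinear

/-- If a bilinear form `B(x,y) = Σ b_{ij}xᵢyⱼ` over `𝔽₂` has zero right radical (the matrix
has trivial kernel acting on `y`), then `B(x,y), B(x,y²), …, B(x,y^{2^{n-1}})` is a regular
sequence of length `n` in `𝔽₂[x₁,…,xₙ,y₁,…,yₙ]`. -/
theorem stmt15 (n : ℕ) (b : Matrix (Fin n) (Fin n) (ZMod 2))
    (hrad : ∀ v : Fin n → ZMod 2, b.mulVec v = 0 → v = 0) :
    RingTheory.Sequence.IsRegular (MvPolynomial (Fin n ⊕ Fin n) (ZMod 2))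
      (List.ofFn fun l : Fin n =>
        ∑ i : Fin n, ∑ j : Fin n,
          C (b i j) * X (Sum.inl i) * X (Sum.inr j) ^ (2 ^ l.val)) := by
  have hb : IsUnit b.det := by
    refine isUnit_iff_ne_zero.mpr fun hdet => ?_
    obtain ⟨v, hv, hbv⟩ := Matrix.exists_mulVec_eq_zero_iff.mpr hdet
    exact hv (hrad v hbv)
  exact FrobeniusBilinear.isRegular_ofFn (FrobeniusBilinear.isWeaklyRegularPrefix_bilinForm hb)
    (FrobeniusBilinear.prefixSpan_bilinForm_ne_top b)
end

section
/- In 𝔽₂[x₁,…,xₘ,y₁,…,yₘ], the sequence x₁y₁ + x₂y₂ + ⋯ + xₘyₘ, x₁y₁² + ⋯ + xₘyₘ², x₁y₁⁴ + ⋯ + xₘyₘ⁴, …, x₁y₁^{2^{m-1}} + ⋯ + xₘyₘ^{2^{m-1}} is a regular sequence of length m. -/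
/-!
Give `xᵢ` the weight `3 (2ᵐ - 2ⁱ)` and `yᵢ` the weight `2 i`. Then the heaviest monomial of
`fₗ = Σᵢ xᵢ yᵢ^(2ˡ)` is `xₗ yₗ^(2ˡ)`, and these leading monomials are pairwise coprime.

For any family `fᵢ = X^(Aᵢ) + (lighter terms)` with pairwise coprime `X^(Aᵢ)`, a syzygy of the
leading monomials is generated by the Koszul syzygies, and each of these lifts to the family
(Buchberger's coprime criterion). Lowering the weight of a representation `p = Σ cᵢ fᵢ` step by step
therefore shows that the top-weight part of every `p ∈ (fᵢ)_{i ∈ t}` lies in the monomial ideal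
`(X^(Aᵢ))_{i ∈ t}`. If `a fₗ ∈ (fᵢ)_{i ∈ t}` with `l ∉ t`, the top part of `a` times `X^(Aₗ)` lies in
that monomial ideal, coprimality cancels `X^(Aₗ)`, and subtracting a combination of the `fᵢ`
strictly lowers the weight of `a`; by induction `a ∈ (fᵢ)_{i ∈ t}`.
-/

open MvPolynomial Finsupp Function

theorem Finsupp.le_of_le_add_of_disjoint {σ : Type*} {A B ν : σ →₀ ℕ}
    (h : Disjoint A.support B.support) (hle : A ≤ ν + B) : A ≤ ν := by
  intro x
  by_cases hx : x ∈ A.support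
  · simpa [Finsupp.notMem_support_iff.mp (Finset.disjoint_left.mp h hx)] using hle x
  · simp [Finsupp.notMem_support_iff.mp hx]

theorem Finset.sum_mul_add_sum_mul_eq_koszul {S ι : Type*} [CommRing S] (t : Finset ι) (k : ι)
    (g s X f : ι → S) :
    (∑ i ∈ t, g i * X i) * f k + ∑ i ∈ t, s i * f i =
      -(∑ i ∈ t, g i * (f i - X i)) * f k + ∑ i ∈ t, (s i + g i * X k) * f i +
        ∑ i ∈ t, g i * (f k - X k) * f i := by
  simp only [Finset.sum_mul, ← Finset.sum_neg_distrib, ← Finset.sum_add_distrib]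
  exact Finset.sum_congr rfl fun i _ ↦ by ring

namespace MvPolynomial

section WeightedDegree

variable {R σ : Type*} [CommRing R] (w : σ → ℕ)

noncomputable def weightedDegreeLE (n : ℕ) : Submodule R (MvPolynomial σ R) :=
  restrictSupport R {μ | weight w μ ≤ n}

noncomputable def weightedDegreeLT (n : ℕ) : Submodule R (MvPolynomial σ R) :=
  restrictSupport R {μ | weight w μ < n}

variable {w}

theorem mem_weightedDegreeLE {n : ℕ} {p : MvPolynomial σ R} :
    p ∈ weightedDegreeLE w n ↔ ∀ μ ∈ p.support, weight w μ ≤ n :=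
  Iff.rfl

theorem mem_weightedDegreeLT {n : ℕ} {p : MvPolynomial σ R} :
    p ∈ weightedDegreeLT w n ↔ ∀ μ ∈ p.support, weight w μ < n :=
  Iff.rfl

theorem weightedDegreeLT_zero : weightedDegreeLT w 0 = (⊥ : Submodule R (MvPolynomial σ R)) := by
  ext p
  simp [mem_weightedDegreeLT, ← support_eq_empty, Finset.eq_empty_iff_forall_notMem]

theorem weightedDegreeLT_succ (n : ℕ) :
    weightedDegreeLT w (n + 1) = (weightedDegreeLE w n : Submodule R (MvPolynomial σ R)) := by
  ext p
  simp [mem_weightedDegreeLT, mem_weightedDegreeLE]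

theorem weightedDegreeLT_le_weightedDegreeLE (n : ℕ) :
    weightedDegreeLT w n ≤ (weightedDegreeLE w n : Submodule R (MvPolynomial σ R)) :=
  fun _ hp ↦ mem_weightedDegreeLE.mpr fun _ hμ ↦ (mem_weightedDegreeLT.mp hp _ hμ).le

theorem weightedDegreeLE_mono {a b : ℕ} (h : a ≤ b) :
    weightedDegreeLE w a ≤ (weightedDegreeLE w b : Submodule R (MvPolynomial σ R)) :=
  fun _ hp ↦ mem_weightedDegreeLE.mpr fun μ hμ ↦ (mem_weightedDegreeLE.mp hp μ hμ).trans h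

theorem mem_weightedDegreeLE_weightedTotalDegree (p : MvPolynomial σ R) :
    p ∈ weightedDegreeLE w (weightedTotalDegree w p) :=
  mem_weightedDegreeLE.mpr fun _ hμ ↦ le_weightedTotalDegree w hμ

theorem monomial_mem_weightedDegreeLE (A : σ →₀ ℕ) (c : R) :
    monomial A c ∈ weightedDegreeLE w (weight w A) :=
  mem_weightedDegreeLE.mpr fun _ hμ ↦
    (congrArg _ (Finset.mem_singleton.mp (support_monomial_subset hμ))).le

theorem mul_mem_weightedDegreeLE {a b : ℕ} {p q : MvPolynomial σ R}
    (hp : p ∈ weightedDegreeLE w a) (hq : q ∈ weightedDegreeLE w b) :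
    p * q ∈ weightedDegreeLE w (a + b) := by
  classical
  refine mem_weightedDegreeLE.mpr fun μ hμ ↦ ?_
  obtain ⟨ν, hν, ρ, hρ, rfl⟩ := Finset.mem_add.mp (support_mul p q hμ)
  rw [map_add]
  exact add_le_add (mem_weightedDegreeLE.mp hp ν hν) (mem_weightedDegreeLE.mp hq ρ hρ)

theorem add_mem_support_mul_monomial {p : MvPolynomial σ R} {ν A : σ →₀ ℕ}
    (hν : ν ∈ p.support) : ν + A ∈ (p * monomial A 1).support := by
  simpa [mem_support_iff, coeff_mul_monomial] using hν

theorem exists_add_eq_of_mem_support_mul_monomial {p : MvPolynomial σ R} {μ A : σ →₀ ℕ}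
    (hμ : μ ∈ (p * monomial A 1).support) : ∃ ν ∈ p.support, ν + A = μ := by
  classical
  obtain ⟨ν, hν, ρ, hρ, rfl⟩ := Finset.mem_add.mp (support_mul _ _ hμ)
  obtain rfl := Finset.mem_singleton.mp (support_monomial_subset hρ)
  exact ⟨ν, hν, rfl⟩

theorem mul_monomial_mem_weightedDegreeLE_iff {n : ℕ} {p : MvPolynomial σ R} {A : σ →₀ ℕ} :
    p * monomial A 1 ∈ weightedDegreeLE w n ↔ ∀ ν ∈ p.support, weight w ν + weight w A ≤ n := by
  rw [mem_weightedDegreeLE]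
  refine ⟨fun h ν hν ↦ ?_, fun h μ hμ ↦ ?_⟩
  · simpa using h _ (add_mem_support_mul_monomial hν)
  · obtain ⟨ν, hν, rfl⟩ := exists_add_eq_of_mem_support_mul_monomial hμ
    simpa using h ν hν

theorem mul_mem_weightedDegreeLT_of_mul_monomial_mem {n : ℕ} {p r : MvPolynomial σ R}
    {A : σ →₀ ℕ} (hp : p * monomial A 1 ∈ weightedDegreeLE w n)
    (hr : r ∈ weightedDegreeLT w (weight w A)) : p * r ∈ weightedDegreeLT w n := by
  classical
  refine mem_weightedDegreeLT.mpr fun μ hμ ↦ ?_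
  obtain ⟨ν, hν, ρ, hρ, rfl⟩ := Finset.mem_add.mp (support_mul p r hμ)
  have := mul_monomial_mem_weightedDegreeLE_iff.mp hp ν hν
  have := mem_weightedDegreeLT.mp hr ρ hρ
  rw [map_add]
  omega

theorem support_weightedHomogeneousComponent_subset (n : ℕ) (p : MvPolynomial σ R) :
    (weightedHomogeneousComponent w n p).support ⊆ p.support := by
  rw [support_weightedHomogeneousComponent]
  exact Finset.filter_subset _ _

theorem weightedHomogeneousComponent_mem_weightedDegreeLE (n : ℕ) (p : MvPolynomial σ R) :
    weightedHomogeneousComponent w n p ∈ weightedDegreeLE w n := by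
  refine mem_weightedDegreeLE.mpr fun μ hμ ↦ ?_
  rw [support_weightedHomogeneousComponent, Finset.mem_filter] at hμ
  exact hμ.2.le

theorem weightedHomogeneousComponent_eq_zero_of_mem_weightedDegreeLT {n : ℕ}
    {p : MvPolynomial σ R} (hp : p ∈ weightedDegreeLT w n) :
    weightedHomogeneousComponent w n p = 0 :=
  weightedHomogeneousComponent_eq_zero' n p fun μ hμ ↦ (mem_weightedDegreeLT.mp hp μ hμ).ne

theorem sub_weightedHomogeneousComponent_mem_weightedDegreeLT {n : ℕ} {p : MvPolynomial σ R}
    (hp : p ∈ weightedDegreeLE w n) :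
    p - weightedHomogeneousComponent w n p ∈ weightedDegreeLT w n := by
  refine mem_weightedDegreeLT.mpr fun μ hμ ↦ ?_
  rw [mem_support_iff, coeff_sub, coeff_weightedHomogeneousComponent] at hμ
  by_cases h : weight w μ = n
  · simp [h] at hμ
  · rw [if_neg h, sub_zero] at hμ
    exact lt_of_le_of_ne (mem_weightedDegreeLE.mp hp μ (mem_support_iff.mpr hμ)) h

theorem weightedHomogeneousComponent_add_weight_mul_monomial (n : ℕ) (p : MvPolynomial σ R)
    (A : σ →₀ ℕ) :
    weightedHomogeneousComponent w (n + weight w A) (p * monomial A 1) =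
      weightedHomogeneousComponent w n p * monomial A 1 := by
  ext μ
  rw [coeff_weightedHomogeneousComponent, coeff_mul_monomial', coeff_mul_monomial']
  by_cases hA : A ≤ μ
  · have : weight w (μ - A) + weight w A = weight w μ := by
      rw [← map_add, tsub_add_cancel_of_le hA]
    simp only [if_pos hA, coeff_weightedHomogeneousComponent, mul_one]
    exact if_congr (by omega) rfl rfl
  · simp [hA]

end WeightedDegree

section MonomialIdeal

variable {R σ ι : Type*} [CommRing R] {A : ι → σ →₀ ℕ} {t : Finset ι}

theorem exists_le_of_mem_support_sum_mul_monomial {c : ι → MvPolynomial σ R} {μ : σ →₀ ℕ}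
    (hμ : μ ∈ (∑ i ∈ t, c i * monomial (A i) 1).support) : ∃ i ∈ t, A i ≤ μ := by
  classical
  obtain ⟨i, hi, hμi⟩ := Finset.mem_biUnion.mp (support_sum hμ)
  obtain ⟨ν, -, rfl⟩ := exists_add_eq_of_mem_support_mul_monomial hμi
  exact ⟨i, hi, le_add_self⟩

theorem exists_le_of_mem_support_of_mul_monomial {B : σ →₀ ℕ} {q : MvPolynomial σ R}
    (hB : ∀ i ∈ t, Disjoint (A i).support B.support)
    (hq : ∀ μ ∈ (q * monomial B 1).support, ∃ i ∈ t, A i ≤ μ) :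
    ∀ ν ∈ q.support, ∃ i ∈ t, A i ≤ ν := by
  intro ν hν
  obtain ⟨i, hi, hle⟩ := hq _ (add_mem_support_mul_monomial hν)
  exact ⟨i, hi, Finsupp.le_of_le_add_of_disjoint (hB i hi) hle⟩

theorem exists_sum_mul_monomial_eq {q : MvPolynomial σ R}
    (hq : ∀ μ ∈ q.support, ∃ i ∈ t, A i ≤ μ) :
    ∃ e : ι → MvPolynomial σ R, q = ∑ i ∈ t, e i * monomial (A i) 1 ∧
      ∀ i ∈ t, (e i * monomial (A i) 1).support ⊆ q.support := by
  classical
  rcases eq_or_ne q 0 with rfl | hq0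
  · exact ⟨0, by simp, by simp⟩
  obtain ⟨i₀, -, -⟩ := hq _ (support_nonempty.mpr hq0).choose_spec
  have : Nonempty ι := ⟨i₀⟩
  choose! g hgt hgA using hq
  have key : ∀ i, (∑ μ ∈ q.support with g μ = i, monomial (μ - A i) (coeff μ q)) *
      monomial (A i) 1 = ∑ μ ∈ q.support with g μ = i, monomial μ (coeff μ q) := by
    intro i
    rw [Finset.sum_mul]
    refine Finset.sum_congr rfl fun μ hμ ↦ ?_
    obtain ⟨hμq, rfl⟩ := Finset.mem_filter.mp hμ
    rw [monomial_mul, mul_one, tsub_add_cancel_of_le (hgA μ hμq)]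
  refine ⟨fun i ↦ ∑ μ ∈ q.support with g μ = i, monomial (μ - A i) (coeff μ q), ?_,
    fun i _ ↦ ?_⟩
  · simp only [key]
    rw [Finset.sum_fiberwise_of_maps_to hgt]
    exact q.as_sum
  · intro μ hμ
    rw [key] at hμ
    obtain ⟨ν, hν, hμν⟩ := Finset.mem_biUnion.mp (support_sum hμ)
    rw [Finset.mem_singleton.mp (support_monomial_subset hμν)]
    exact (Finset.mem_filter.mp hν).1

end MonomialIdeal

section CoprimeLeadingMonomials

variable {R σ ι : Type*} [CommRing R] {w : σ → ℕ} {A : ι → σ →₀ ℕ} {f : ι → MvPolynomial σ R}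

theorem exists_sum_mul_monomial_eq_of_add_sum_eq_zero {t : Finset ι} {k : ι} (hk : k ∉ t)
    (hA : Pairwise (Disjoint on fun i ↦ (A i).support)) {s : ι → MvPolynomial σ R}
    (hs : s k * monomial (A k) 1 + ∑ i ∈ t, s i * monomial (A i) 1 = 0) :
    ∃ g : ι → MvPolynomial σ R, s k = ∑ i ∈ t, g i * monomial (A i) 1 ∧
      ∀ i ∈ t, (g i * monomial (A i) 1).support ⊆ (s k).support := by
  refine exists_sum_mul_monomial_eq <| exists_le_of_mem_support_of_mul_monomial
    (fun i hi ↦ hA (ne_of_mem_of_not_mem hi hk)) fun μ hμ ↦ ?_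
  rw [eq_neg_of_add_eq_zero_left hs, ← Finset.sum_neg_distrib] at hμ
  simp_rw [← neg_mul] at hμ
  exact exists_le_of_mem_support_sum_mul_monomial hμ

theorem exists_sum_mul_eq_of_sum_mul_monomial_eq_zero
    (hA : Pairwise (Disjoint on fun i ↦ (A i).support))
    (hf : ∀ i, f i - monomial (A i) 1 ∈ weightedDegreeLT w (weight w (A i))) {E : ℕ}
    (t : Finset ι) (s : ι → MvPolynomial σ R) (hs : ∑ i ∈ t, s i * monomial (A i) 1 = 0)
    (hsE : ∀ i ∈ t, s i * monomial (A i) 1 ∈ weightedDegreeLE w E) :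
    ∃ d : ι → MvPolynomial σ R, ∑ i ∈ t, s i * f i = ∑ i ∈ t, d i * f i ∧
      ∀ i ∈ t, d i * monomial (A i) 1 ∈ weightedDegreeLT w E := by
  classical
  induction t using Finset.induction_on generalizing s with
  | empty => exact ⟨0, rfl, by simp⟩
  | insert k t hk ih =>
    set X : ι → MvPolynomial σ R := fun i ↦ monomial (A i) 1
    set r : ι → MvPolynomial σ R := fun i ↦ f i - X i
    rw [Finset.sum_insert hk] at hs
    rw [Finset.forall_mem_insert] at hsE
    obtain ⟨g, hgs, hgsupp⟩ := exists_sum_mul_monomial_eq_of_add_sum_eq_zero hk hA hs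
    have hgE : ∀ i ∈ t, g i * X i * X k ∈ weightedDegreeLE w E := fun i hi ↦
      mul_monomial_mem_weightedDegreeLE_iff.mpr fun ν hν ↦
        mul_monomial_mem_weightedDegreeLE_iff.mp hsE.1 ν (hgsupp i hi hν)
    obtain ⟨d, hd, hdE⟩ := ih (fun i ↦ s i + g i * X k)
      (by
        simp only [add_mul, Finset.sum_add_distrib, mul_right_comm _ (X k), ← Finset.sum_mul,
          ← hgs]
        linear_combination hs)
      fun i hi ↦ by
        rw [add_mul, mul_right_comm]
        exact add_mem (hsE.2 i hi) (hgE i hi)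
    -- `g i * X i * f k = g i * X k * f i + g i * r k * f i - g i * r i * f k`, and the last two
    -- terms are lighter than `E`.
    refine ⟨fun i ↦ if i = k then -∑ j ∈ t, g j * r j else d i + g i * r k, ?_, ?_⟩
    · rw [Finset.sum_insert hk, Finset.sum_insert hk]
      dsimp only
      rw [if_pos rfl, Finset.sum_congr rfl fun i hi ↦
        congrArg (· * f i) (if_neg (ne_of_mem_of_not_mem hi hk)), hgs,
        Finset.sum_mul_add_sum_mul_eq_koszul, hd]
      simp only [add_mul, Finset.sum_add_distrib, add_assoc]
      rfl
    · rw [Finset.forall_mem_insert]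
      dsimp only
      rw [if_pos rfl]
      refine ⟨?_, fun i hi ↦ ?_⟩
      · rw [neg_mul, Finset.sum_mul]
        refine neg_mem (Submodule.sum_mem _ fun j hj ↦ ?_)
        rw [mul_right_comm]
        exact mul_mem_weightedDegreeLT_of_mul_monomial_mem
          (by rw [mul_right_comm]; exact hgE j hj) (hf j)
      · rw [if_neg (ne_of_mem_of_not_mem hi hk), add_mul, mul_right_comm]
        exact add_mem (hdE i hi) (mul_mem_weightedDegreeLT_of_mul_monomial_mem (hgE i hi) (hf k))

theorem weightedHomogeneousComponent_sum_mul
    (hf : ∀ i, f i - monomial (A i) 1 ∈ weightedDegreeLT w (weight w (A i)))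
    {t : Finset ι} {c : ι → MvPolynomial σ R} {E : ℕ}
    (hcE : ∀ i ∈ t, c i * monomial (A i) 1 ∈ weightedDegreeLE w E) :
    weightedHomogeneousComponent w E (∑ i ∈ t, c i * f i) =
      weightedHomogeneousComponent w E (∑ i ∈ t, c i * monomial (A i) 1) := by
  have hsplit : ∑ i ∈ t, c i * f i = ∑ i ∈ t, c i * monomial (A i) 1 +
      ∑ i ∈ t, c i * (f i - monomial (A i) 1) := by
    rw [← Finset.sum_add_distrib]
    exact Finset.sum_congr rfl fun i _ ↦ by ring
  rw [hsplit, map_add, weightedHomogeneousComponent_eq_zero_of_mem_weightedDegreeLT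
    (Submodule.sum_mem _ fun i hi ↦ mul_mem_weightedDegreeLT_of_mul_monomial_mem (hcE i hi) (hf i)),
    add_zero]

theorem exists_sum_mul_eq_of_weightedHomogeneousComponent_eq_zero
    (hA : Pairwise (Disjoint on fun i ↦ (A i).support))
    (hf : ∀ i, f i - monomial (A i) 1 ∈ weightedDegreeLT w (weight w (A i)))
    {t : Finset ι} {c : ι → MvPolynomial σ R} {E : ℕ}
    (hcE : ∀ i ∈ t, c i * monomial (A i) 1 ∈ weightedDegreeLE w E)
    (hE : weightedHomogeneousComponent w E (∑ i ∈ t, c i * f i) = 0) :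
    ∃ c' : ι → MvPolynomial σ R, ∑ i ∈ t, c i * f i = ∑ i ∈ t, c' i * f i ∧
      ∀ i ∈ t, c' i * monomial (A i) 1 ∈ weightedDegreeLT w E := by
  set s : ι → MvPolynomial σ R := fun i ↦ weightedHomogeneousComponent w (E - weight w (A i)) (c i)
  have hs : ∀ i ∈ t, s i * monomial (A i) 1 =
      weightedHomogeneousComponent w E (c i * monomial (A i) 1) := by
    intro i hi
    rcases eq_or_ne (c i) 0 with hc | hc
    · simp [s, hc]
    obtain ⟨ν, hν⟩ := support_nonempty.mpr hc
    have := mul_monomial_mem_weightedDegreeLE_iff.mp (hcE i hi) ν hν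
    rw [← weightedHomogeneousComponent_add_weight_mul_monomial, Nat.sub_add_cancel (by omega)]
  have hsyz : ∑ i ∈ t, s i * monomial (A i) 1 = 0 := by
    rw [Finset.sum_congr rfl hs, ← map_sum, ← hE, weightedHomogeneousComponent_sum_mul hf hcE]
  obtain ⟨d, hd, hdE⟩ := exists_sum_mul_eq_of_sum_mul_monomial_eq_zero hA hf t s hsyz
    fun i hi ↦ hs i hi ▸ weightedHomogeneousComponent_mem_weightedDegreeLE E _
  refine ⟨fun i ↦ c i - s i + d i, ?_, fun i hi ↦ ?_⟩
  · simp only [add_mul, sub_mul, Finset.sum_add_distrib, Finset.sum_sub_distrib, ← hd]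
    ring
  · rw [add_mul, sub_mul, hs i hi]
    exact add_mem (sub_weightedHomogeneousComponent_mem_weightedDegreeLT (hcE i hi)) (hdE i hi)

theorem exists_sum_mul_eq_of_mem_weightedDegreeLE
    (hA : Pairwise (Disjoint on fun i ↦ (A i).support))
    (hf : ∀ i, f i - monomial (A i) 1 ∈ weightedDegreeLT w (weight w (A i)))
    {t : Finset ι} {p : MvPolynomial σ R} (hp : p ∈ Ideal.span (f '' t)) {n : ℕ}
    (hpn : p ∈ weightedDegreeLE w n) :
    ∃ c : ι → MvPolynomial σ R, p = ∑ i ∈ t, c i * f i ∧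
      ∀ i ∈ t, c i * monomial (A i) 1 ∈ weightedDegreeLE w n := by
  obtain ⟨c, rfl⟩ : ∃ c : ι → MvPolynomial σ R, ∑ i ∈ t, c i * f i = p := by
    simpa using (Submodule.mem_span_image_finset_iff_exists_fun' _).mp hp
  suffices ∀ E, n ≤ E → ∀ c' : ι → MvPolynomial σ R, ∑ i ∈ t, c i * f i = ∑ i ∈ t, c' i * f i →
      (∀ i ∈ t, c' i * monomial (A i) 1 ∈ weightedDegreeLE w E) →
      ∃ c'' : ι → MvPolynomial σ R, ∑ i ∈ t, c i * f i = ∑ i ∈ t, c'' i * f i ∧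
        ∀ i ∈ t, c'' i * monomial (A i) 1 ∈ weightedDegreeLE w n by
    set D := t.sup fun i ↦ weightedTotalDegree w (c i * monomial (A i) 1)
    refine this (max n D) (le_max_left n D) c rfl fun i hi ↦ weightedDegreeLE_mono
      (le_max_of_le_right (Finset.le_sup (f := fun i ↦ weightedTotalDegree w
        (c i * monomial (A i) 1)) hi)) (mem_weightedDegreeLE_weightedTotalDegree _)
  intro E hE
  induction E, hE using Nat.le_induction with
  | base => exact fun c' hc' hc'n ↦ ⟨c', hc', hc'n⟩
  | succ E hnE ih =>
    intro c' hc' hc'E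
    have hE : weightedHomogeneousComponent w (E + 1) (∑ i ∈ t, c' i * f i) = 0 := by
      rw [← hc']
      refine weightedHomogeneousComponent_eq_zero_of_mem_weightedDegreeLT ?_
      rw [weightedDegreeLT_succ]
      exact weightedDegreeLE_mono hnE hpn
    obtain ⟨c'', hc'', hc''E⟩ :=
      exists_sum_mul_eq_of_weightedHomogeneousComponent_eq_zero hA hf hc'E hE
    exact ih c'' (hc'.trans hc'') (by simpa only [weightedDegreeLT_succ] using hc''E)

theorem exists_le_of_mem_support_weightedHomogeneousComponent
    (hA : Pairwise (Disjoint on fun i ↦ (A i).support))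
    (hf : ∀ i, f i - monomial (A i) 1 ∈ weightedDegreeLT w (weight w (A i)))
    {t : Finset ι} {p : MvPolynomial σ R} (hp : p ∈ Ideal.span (f '' t)) {n : ℕ}
    (hpn : p ∈ weightedDegreeLE w n) {μ : σ →₀ ℕ}
    (hμ : μ ∈ (weightedHomogeneousComponent w n p).support) : ∃ i ∈ t, A i ≤ μ := by
  obtain ⟨c, rfl, hcn⟩ := exists_sum_mul_eq_of_mem_weightedDegreeLE hA hf hp hpn
  rw [weightedHomogeneousComponent_sum_mul hf hcn] at hμ
  exact exists_le_of_mem_support_sum_mul_monomial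
    (support_weightedHomogeneousComponent_subset _ _ hμ)

theorem exists_sub_sum_mul_mem_weightedDegreeLT
    (hA : Pairwise (Disjoint on fun i ↦ (A i).support))
    (hf : ∀ i, f i - monomial (A i) 1 ∈ weightedDegreeLT w (weight w (A i)))
    {t : Finset ι} {l : ι} (hl : l ∉ t) {a : MvPolynomial σ R} {n : ℕ}
    (ha : a ∈ weightedDegreeLE w n) (hal : a * f l ∈ Ideal.span (f '' t)) :
    ∃ e : ι → MvPolynomial σ R, a - ∑ i ∈ t, e i * f i ∈ weightedDegreeLT w n := by
  set q := weightedHomogeneousComponent w n a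
  have haX : a * monomial (A l) 1 ∈ weightedDegreeLE w (n + weight w (A l)) :=
    mul_mem_weightedDegreeLE ha (monomial_mem_weightedDegreeLE _ _)
  have hf_le : f l ∈ weightedDegreeLE w (weight w (A l)) := by
    rw [← add_sub_cancel (monomial (A l) (1 : R)) (f l)]
    exact add_mem (monomial_mem_weightedDegreeLE _ _)
      (weightedDegreeLT_le_weightedDegreeLE _ (hf l))
  have hq : q * monomial (A l) 1 =
      weightedHomogeneousComponent w (n + weight w (A l)) (a * f l) := by
    rw [← weightedHomogeneousComponent_add_weight_mul_monomial,
      show a * f l = a * monomial (A l) 1 + a * (f l - monomial (A l) 1) by ring, map_add,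
      weightedHomogeneousComponent_eq_zero_of_mem_weightedDegreeLT
        (mul_mem_weightedDegreeLT_of_mul_monomial_mem haX (hf l)), add_zero]
  have hdvd := exists_le_of_mem_support_of_mul_monomial
    (fun i hi ↦ hA (ne_of_mem_of_not_mem hi hl)) fun μ hμ ↦ by
      rw [hq] at hμ
      exact exists_le_of_mem_support_weightedHomogeneousComponent hA hf hal
        (mul_mem_weightedDegreeLE ha hf_le) hμ
  obtain ⟨e, hqe, hesupp⟩ := exists_sum_mul_monomial_eq hdvd
  refine ⟨e, ?_⟩
  have : a - ∑ i ∈ t, e i * f i = (a - q) - ∑ i ∈ t, e i * (f i - monomial (A i) 1) := by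
    simp only [hqe, mul_sub, Finset.sum_sub_distrib]
    ring
  rw [this]
  refine sub_mem (sub_weightedHomogeneousComponent_mem_weightedDegreeLT ha)
    (Submodule.sum_mem _ fun i hi ↦ mul_mem_weightedDegreeLT_of_mul_monomial_mem ?_ (hf i))
  exact mem_weightedDegreeLE.mpr fun μ hμ ↦ mem_weightedDegreeLE.mp ha μ
    (support_weightedHomogeneousComponent_subset _ _ (hesupp i hi hμ))

theorem mem_span_of_mul_mem_span
    (hA : Pairwise (Disjoint on fun i ↦ (A i).support))
    (hf : ∀ i, f i - monomial (A i) 1 ∈ weightedDegreeLT w (weight w (A i)))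
    {t : Finset ι} {l : ι} (hl : l ∉ t) {a : MvPolynomial σ R}
    (hal : a * f l ∈ Ideal.span (f '' t)) : a ∈ Ideal.span (f '' t) := by
  suffices ∀ n, ∀ a ∈ weightedDegreeLT w n, a * f l ∈ Ideal.span (f '' t) →
      a ∈ Ideal.span (f '' t) from
    this _ a (weightedDegreeLT_succ (R := R) _ ▸ mem_weightedDegreeLE_weightedTotalDegree a) hal
  intro n
  induction n with
  | zero =>
    intro a ha _
    rw [weightedDegreeLT_zero, Submodule.mem_bot] at ha
    simp [ha]
  | succ n ih =>
    intro a ha hal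
    rw [weightedDegreeLT_succ] at ha
    obtain ⟨e, he⟩ := exists_sub_sum_mul_mem_weightedDegreeLT hA hf hl ha hal
    have hsum : ∑ i ∈ t, e i * f i ∈ Ideal.span (f '' t) :=
      Ideal.sum_mem _ fun i hi ↦ Ideal.mul_mem_left _ _ (Ideal.subset_span ⟨i, hi, rfl⟩)
    have := ih _ he (by rw [sub_mul]; exact sub_mem hal (Ideal.mul_mem_right _ _ hsum))
    simpa using add_mem this hsum

end CoprimeLeadingMonomials

end MvPolynomial

theorem Ideal.ofList_take_ofFn {R : Type*} [CommRing R] {m : ℕ} (F : Fin m → R) (l : Fin m) :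
    Ideal.ofList ((List.ofFn F).take l) = Ideal.span (F '' ↑(Finset.Iio l)) := by
  rw [← Fin.ofFn_take_eq_take_ofFn l.isLt.le, Ideal.ofList]
  congr 1
  ext r
  simp only [Set.mem_ofPred_eq, List.mem_ofFn', Set.mem_range, Fin.take_apply, Finset.coe_Iio,
    Set.mem_image, Set.mem_Iio]
  constructor
  · rintro ⟨j, rfl⟩
    exact ⟨_, Fin.mk_lt_mk.mpr j.isLt, rfl⟩
  · rintro ⟨j, hj, rfl⟩
    exact ⟨⟨j, hj⟩, rfl⟩

theorem RingTheory.Sequence.isRegular_ofFn {R : Type*} [CommRing R] {m : ℕ} (F : Fin m → R)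
    (hF : ∀ l a, a * F l ∈ Ideal.span (F '' ↑(Finset.Iio l)) →
      a ∈ Ideal.span (F '' ↑(Finset.Iio l)))
    (hne : Ideal.span (Set.range F) ≠ ⊤) :
    IsRegular R (List.ofFn F) := by
  refine ⟨(isWeaklyRegular_iff_Fin _ _).mpr fun i ↦ ?_, ?_⟩
  · rw [isSMulRegular_quotient_iff_mem_of_smul_mem, Ideal.smul_eq_mul, Ideal.mul_top,
      ← Fin.val_cast List.length_ofFn i, Ideal.ofList_take_ofFn]
    intro a ha
    rw [smul_eq_mul, mul_comm] at ha
    simp only [Fin.getElem_fin, List.getElem_ofFn] at ha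
    exact hF _ a ha
  · rw [ne_comm, Ideal.smul_eq_mul, Ideal.mul_top, Ideal.ofList]
    simpa only [List.mem_ofFn', Set.ofPred_mem_eq] using hne

namespace FrobeniusPairing

theorem three_mul_two_pow_add_lt {i l : ℕ} (h : i ≠ l) :
    3 * 2 ^ l + 2 ^ l * (2 * i) < 3 * 2 ^ i + 2 ^ l * (2 * l) := by
  rcases Nat.lt_or_gt_of_ne h with hil | hli
  · obtain ⟨k, rfl⟩ := Nat.exists_eq_add_of_lt hil
    have hP : 1 ≤ 2 ^ i := Nat.one_le_two_pow
    rcases k with _ | k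
    · simp only [pow_succ]
      nlinarith
    · have hQ : 1 ≤ 2 ^ k := Nat.one_le_two_pow
      simp only [pow_add, pow_succ] at *
      nlinarith [Nat.mul_le_mul hP hQ]
  · obtain ⟨k, rfl⟩ := Nat.exists_eq_add_of_lt hli
    have hP : 1 ≤ 2 ^ l := Nat.one_le_two_pow
    have hk : k + 1 < 2 ^ (k + 1) := Nat.lt_two_pow_self
    simp only [pow_add, pow_succ] at *
    nlinarith [Nat.mul_le_mul hP hk]

variable (m : ℕ)

/-- Consecutive `x`-weights differ by `3 · 2ⁱ`, strictly between `2^(i+1)` and `2^(i+2)`: this makes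
`i = l` the unique heaviest index in `Σᵢ xᵢ yᵢ^(2ˡ)` (see `three_mul_two_pow_add_lt`). -/
def weight : Fin m ⊕ Fin m → ℕ :=
  Sum.elim (fun i ↦ 3 * (2 ^ m - 2 ^ (i : ℕ))) (fun i ↦ 2 * i)

noncomputable def leadingExponent (l : Fin m) : Fin m ⊕ Fin m →₀ ℕ :=
  single (Sum.inl l) 1 + single (Sum.inr l) (2 ^ (l : ℕ))

theorem weight_single_add_single (i : Fin m) (k : ℕ) :
    Finsupp.weight (weight m) (single (Sum.inl i) 1 + single (Sum.inr i) k) =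
      3 * (2 ^ m - 2 ^ (i : ℕ)) + k * (2 * i) := by
  simp [weight_single, weight]

theorem pairwise_disjoint_support_leadingExponent :
    Pairwise (Disjoint on fun l ↦ (leadingExponent m l).support) := by
  intro i j hij
  refine Finset.disjoint_of_subset_left support_add
    (Finset.disjoint_of_subset_right support_add ?_)
  simp [hij.symm]

theorem sub_monomial_leadingExponent_mem_weightedDegreeLT {R : Type*} [CommRing R] (l : Fin m) :
    (∑ i : Fin m, (X (Sum.inl i) : MvPolynomial (Fin m ⊕ Fin m) R) * X (Sum.inr i) ^ 2 ^ l.val) -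
      monomial (leadingExponent m l) 1 ∈
      weightedDegreeLT (weight m) (Finsupp.weight (weight m) (leadingExponent m l)) := by
  have hmon : ∀ i : Fin m, (X (Sum.inl i) : MvPolynomial (Fin m ⊕ Fin m) R) *
      X (Sum.inr i) ^ 2 ^ l.val =
      monomial (single (Sum.inl i) 1 + single (Sum.inr i) (2 ^ l.val)) 1 := fun i ↦ by
    rw [X_pow_eq_monomial, X, monomial_mul, one_mul]
  rw [← Finset.add_sum_erase _ _ (Finset.mem_univ l), hmon, leadingExponent, add_sub_cancel_left]
  refine Submodule.sum_mem _ fun i hi ↦ mem_weightedDegreeLT.mpr fun μ hμ ↦ ?_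
  rw [hmon] at hμ
  rw [Finset.mem_singleton.mp (support_monomial_subset hμ), weight_single_add_single,
    weight_single_add_single]
  have := three_mul_two_pow_add_lt (Fin.val_ne_of_ne (Finset.ne_of_mem_erase hi))
  have := Nat.pow_le_pow_right two_pos i.isLt.le
  have := Nat.pow_le_pow_right two_pos l.isLt.le
  omega

end FrobeniusPairing

/-- In `𝔽₂[x₁,…,xₘ,y₁,…,yₘ]`, the sequence `Σᵢ xᵢyᵢ, Σᵢ xᵢyᵢ², Σᵢ xᵢyᵢ⁴, …,
`Σᵢ xᵢyᵢ^{2^{m-1}}` is a regular sequence of length `m`. -/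
theorem stmt16 (m : ℕ) :
    RingTheory.Sequence.IsRegular (MvPolynomial (Fin m ⊕ Fin m) (ZMod 2))
      (List.ofFn fun l : Fin m =>
        ∑ i : Fin m,
          (X (Sum.inl i) : MvPolynomial (Fin m ⊕ Fin m) (ZMod 2)) *
            X (Sum.inr i) ^ (2 ^ l.val)) := by
  refine RingTheory.Sequence.isRegular_ofFn _ (fun l _ ↦ mem_span_of_mul_mem_span
    (FrobeniusPairing.pairwise_disjoint_support_leadingExponent m)
    (FrobeniusPairing.sub_monomial_leadingExponent_mem_weightedDegreeLT m)
    (Finset.notMem_Iio_self (b := l))) ?_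
  refine ne_top_of_le_ne_top (RingHom.ker_ne_top (constantCoeff (R := ZMod 2))) ?_
  rw [Ideal.span_le]
  rintro _ ⟨l, rfl⟩
  simp
end
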